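/- Let S be a left cancellative monoid. For s ∈ S let λ_s be the bounded operator (isometry) on the complex Hilbert space ℓ²(S) with λ_s δ_t = δ_{st}; for X ⊆ S let 1_X be the orthogonal projection on ℓ²(S) with 1_X δ_s = δ_s for s ∈ X and 1_X δ_s = 0 otherwise; let C*_r(S) be the closed *-subalgebra of bounded operators on ℓ²(S) generated by {λ_s : s ∈ S}; and let I be the smallest closed two-sided ideal of C*_r(S) containing all projections ∏_{i=1}^m (1_X − 1_{X_i}) = 1_{X ∖ (X_1 ∪ ⋯ ∪ X_m)}, where X ∈ J(S), m ≥ 1, and {X_1,…,X_m} is a foundation set for X (these projections lie in C*_r(S)). Then for every nonempty constructible right ideal A ∈ J(S), the projection 1_A does not belong to I; in particular I is a proper ideal of C*_r(S). -/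

import Mathlib

open scoped Classical

namespace SgC

variable {M : Type*}

/-- Composition of partial maps (`g` after `f`). -/
def pcomp (g f : M → Option M) : M → Option M := fun s => (f s).bind g

/-- The canonical partial inverse of a partial map (the genuine inverse when the map
is injective on its domain, as is the case for all maps in the left inverse hull of a
left cancellative monoid). -/
noncomputable def pinv (f : M → Option M) : M → Option M :=
  fun t => if h : ∃ s, f s = some t then some h.choose else none

/-- Left translation `t ↦ s * t` as an everywhere-defined partial map. -/
def ptransl [Mul M] (s : M) : M → Option M := fun t => some (s * t)

/-- The identity partial map. -/
def pid : M → Option M := fun s => some s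

/-- The block `q⁻¹ ∘ p`: first multiply on the left by `p`, then remove `q` on the left. -/
noncomputable def pblock [Mul M] (p : M × M) : M → Option M :=
  pcomp (pinv (ptransl p.2)) (ptransl p.1)

/-- Membership in the left inverse hull `I_ℓ(M)`: `h` is of the form
`s₂ₙ⁻¹ s₂ₙ₋₁ ⋯ s₂⁻¹ s₁` for some `n ≥ 1` and `sᵢ ∈ M` (the list records the pairs
`(s₁,s₂), (s₃,s₄), …`, applied left to right). -/
def InInvHull [Mul M] (h : M → Option M) : Prop :=
  ∃ l : List (M × M), l ≠ [] ∧
    h = l.foldl (fun acc p => pcomp (pblock p) acc) pid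

/-- Membership in the inverse hull generated by translations by elements of `σ` only
(used for canonical copies of `I_ℓ(S)` inside partial maps of a larger monoid). -/
def InInvHullOn [Mul M] (σ : Set M) (h : M → Option M) : Prop :=
  ∃ l : List (M × M), l ≠ [] ∧ (∀ p ∈ l, p.1 ∈ σ ∧ p.2 ∈ σ) ∧
    h = l.foldl (fun acc p => pcomp (pblock p) acc) pid

/-- Domain of a partial map. -/
def pdom (h : M → Option M) : Set M := {s | h s ≠ none}

/-- `h` fixes the set `Y` pointwise (in particular `Y ⊆ dom h`). -/
def PFixes (h : M → Option M) (Y : Set M) : Prop := ∀ s ∈ Y, h s = some s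

/-- Preimage of a set under a partial map. -/
def ppre (h : M → Option M) (X : Set M) : Set M := {s | ∃ x ∈ X, h s = some x}

/-- Constructible right ideals: domains of elements of the left inverse hull. -/
def IsConstructible [Mul M] (X : Set M) : Prop := ∃ h, InInvHull h ∧ X = pdom h

/-- Membership in `J̄(S)`: sets of the form `X₀` or `X₀ ∖ (X₁ ∪ ⋯ ∪ Xₘ)` with all
`Xᵢ` constructible. -/
def IsConstructibleBar [Mul M] (X : Set M) : Prop :=
  ∃ (X₀ : Set M) (m : ℕ) (Xi : Fin m → Set M),
    IsConstructible X₀ ∧ (∀ i, IsConstructible (Xi i)) ∧ X = X₀ \ ⋃ i, Xi i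

/-- `Xi` is a foundation family for `X`: each `Xi i ⊆ X` and every nonempty
constructible right ideal contained in `X` intersects some `Xi i`. -/
def IsFoundation [Mul M] (X : Set M) {ι : Type*} (Xi : ι → Set M) : Prop :=
  (∀ i, Xi i ⊆ X) ∧
  ∀ Y : Set M, IsConstructible Y → Y.Nonempty → Y ⊆ X → ∃ i, (Y ∩ Xi i).Nonempty

/-- Strong C*-regularity. -/
def StronglyRegular (M : Type*) [Monoid M] : Prop :=
  ∀ (n : ℕ) (h : Fin n → M → Option M), (∀ k, InInvHull (h k)) →
  ∀ (m : ℕ) (X : Set M) (Xi : Fin m → Set M),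
    IsConstructible X → (∀ i, IsConstructible (Xi i)) →
    (X \ ⋃ i, Xi i).Nonempty →
    (X \ ⋃ i, Xi i) ⊆ ⋃ k, {s | h k s = some s} →
    ∃ (l : ℕ) (Y : Fin l → Set M) (kk : Fin l → Fin n),
      (∀ j, IsConstructible (Y j)) ∧
      (X \ ⋃ i, Xi i) ⊆ ⋃ j, Y j ∧
      ∀ j, PFixes (h (kk j)) (Y j)

/-- C*-regularity. -/
def Regular (M : Type*) [Monoid M] : Prop :=
  ∀ (n : ℕ) (h : Fin n → M → Option M), (∀ k, InInvHull (h k)) →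
  ∀ X : Set M, IsConstructibleBar X → X.Nonempty →
    X ⊆ ⋃ k, {s | h k s = some s} →
    ∃ (l : ℕ) (Y : Fin l → Set M) (kk : Fin l → Fin n),
      (∀ j, IsConstructibleBar (Y j)) ∧ X ⊆ ⋃ j, Y j ∧
      ∀ j, PFixes (h (kk j)) (Y j)

/-- Strong C*-regularity on the boundary. -/
def StronglyRegularOnBoundary (M : Type*) [Monoid M] : Prop :=
  ∀ (n : ℕ) (h : Fin n → M → Option M), (∀ k, InInvHull (h k)) →
  ∀ (m : ℕ) (X : Set M) (Xi : Fin m → Set M),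
    IsConstructible X → (∀ i, IsConstructible (Xi i)) → (∀ i, Xi i ⊆ X) →
    (X \ ⋃ i, Xi i).Nonempty →
    (X \ ⋃ i, Xi i) ⊆ ⋃ k, {s | h k s = some s} →
    ∃ (l : ℕ) (Y : Fin l → Set M) (kk : Fin l → Fin n),
      (∀ j, IsConstructible (Y j)) ∧ (∀ j, PFixes (h (kk j)) (Y j)) ∧
      IsFoundation X (Sum.elim Xi Y)

/-- C*-regularity on the boundary. -/
def RegularOnBoundary (M : Type*) [Monoid M] : Prop :=
  ∀ (n : ℕ) (h : Fin n → M → Option M), (∀ k, InInvHull (h k)) →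
  ∀ (m : ℕ) (X : Set M) (Xi : Fin m → Set M),
    IsConstructible X → (∀ i, IsConstructible (Xi i)) → (∀ i, Xi i ⊆ X) →
    (X \ ⋃ i, Xi i).Nonempty →
    (X \ ⋃ i, Xi i) ⊆ ⋃ k, {s | h k s = some s} →
    ∃ (l : ℕ) (Y : Fin l → Set M) (kk : Fin l → Fin n),
      (∀ j, IsConstructibleBar (Y j)) ∧ (∀ j, PFixes (h (kk j)) (Y j)) ∧
      IsFoundation X (Sum.elim Xi Y)

/-- The type of constructible right ideals `J(M)`. -/
def CIdeal (M : Type*) [Mul M] : Type _ := {X : Set M // IsConstructible X}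

/-- The character space `{0,1}^{J(M)}` with the topology of pointwise convergence. -/
abbrev CharSpace (M : Type*) [Mul M] : Type _ := CIdeal M → Bool

/-- The principal character `χ_s`. -/
noncomputable def princhar [Mul M] (s : M) : CharSpace M :=
  fun X => decide (s ∈ X.1)

/-- `Ω(M)`: the closure of the set of principal characters. -/
noncomputable def Omega (M : Type*) [Mul M] : Set (CharSpace M) :=
  closure (Set.range (princhar : M → CharSpace M))

/-- Filters on `J(M)`: nonempty collections of nonempty constructible ideals closed
under intersections and enlargements within `J(M)`. -/
def IsFilterOn [Mul M] (F : Set (CIdeal M)) : Prop :=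
  F.Nonempty ∧ (∀ X ∈ F, (X.1 : Set M).Nonempty) ∧
  (∀ X ∈ F, ∀ Y ∈ F, ∀ Z : CIdeal M, Z.1 = X.1 ∩ Y.1 → Z ∈ F) ∧
  (∀ X ∈ F, ∀ Y : CIdeal M, X.1 ⊆ Y.1 → Y ∈ F)

/-- Nonzero multiplicative `{0,1}`-valued maps on `J(M)`. -/
def IsChar [Mul M] (χ : CharSpace M) : Prop :=
  (∃ X, χ X = true) ∧
  ∀ X Y Z : CIdeal M, Z.1 = X.1 ∩ Y.1 → χ Z = (χ X && χ Y)

/-- Maximal characters: characters whose associated filter is maximal among filters. -/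
def IsMaximalChar [Mul M] (χ : CharSpace M) : Prop :=
  IsChar χ ∧ IsFilterOn {X | χ X = true} ∧
  ∀ G : Set (CIdeal M), IsFilterOn G → {X | χ X = true} ⊆ G → G = {X | χ X = true}

/-- The set of maximal characters `Ω_max(M)`. -/
def OmegaMax (M : Type*) [Mul M] : Set (CharSpace M) := {χ | IsMaximalChar χ}

/-- The boundary `∂Ω(M)`: the closure of the set of maximal characters. -/
noncomputable def BoundaryOmega (M : Type*) [Mul M] : Set (CharSpace M) :=
  closure (OmegaMax M)

/-!
Let `V` be the space of operators `T` on `ℓ²(S)` such that every nonempty constructible right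
ideal `Y` contains a nonempty constructible `Y' ⊆ Y` with `T δₛ = 0` for all `s ∈ Y'`.
Shrinking twice shows that `V` is a linear subspace; it is clearly a left ideal of `B(ℓ²(S))`.
The words in the `λₛ` and `λₛ*` act on the basis by partial bijections from `I_ℓ(S)`, which map
constructible right ideals to constructible right ideals, so `V` is also stable under right
multiplication by `C*_r(S)`. By the foundation property each `1_{X ∖ (X₁ ∪ ⋯ ∪ Xₘ)}` lies in
`V`. Hence `C*_r(S) ∩ closure V` is a closed ideal of `C*_r(S)` containing `I`, and it does not
contain `1_A`: some `T ∈ V` kills a `δₛ` with `s ∈ A`, so `‖1_A - T‖ ≥ 1`.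
-/

def PInjective (f : M → Option M) : Prop :=
  ∀ ⦃s t u : M⦄, f s = some u → f t = some u → s = t

theorem apply_eq_some_of_pinv_eq_some {f : M → Option M} {s t : M} (h : pinv f t = some s) :
    f s = some t := by
  unfold pinv at h
  split_ifs at h with hex
  exact Option.some.inj h ▸ hex.choose_spec

theorem pinv_eq_some_iff {f : M → Option M} (hf : PInjective f) {s t : M} :
    pinv f t = some s ↔ f s = some t := by
  refine ⟨apply_eq_some_of_pinv_eq_some, fun h => ?_⟩
  have hex : ∃ u, f u = some t := ⟨s, h⟩
  rw [pinv, dif_pos hex, hf hex.choose_spec h]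

theorem pinjective_pinv (f : M → Option M) : PInjective (pinv f) := fun _ _ _ hs ht =>
  Option.some.inj ((apply_eq_some_of_pinv_eq_some hs).symm.trans
    (apply_eq_some_of_pinv_eq_some ht))

theorem pinjective_pid : PInjective (pid : M → Option M) := fun _ _ _ hs ht =>
  (Option.some.inj hs).trans (Option.some.inj ht).symm

theorem pinjective_ptransl [Mul M] [IsLeftCancelMul M] (r : M) : PInjective (ptransl r) :=
  fun _ _ _ hs ht => mul_left_cancel ((Option.some.inj hs).trans (Option.some.inj ht).symm)

theorem mem_pdom {f : M → Option M} {s : M} : s ∈ pdom f ↔ ∃ t, f s = some t :=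
  Option.ne_none_iff_exists'

theorem pcomp_eq_some_iff {g f : M → Option M} {s u : M} :
    pcomp g f s = some u ↔ ∃ t, f s = some t ∧ g t = some u :=
  Option.bind_eq_some_iff

theorem PInjective.pcomp {g f : M → Option M} (hg : PInjective g) (hf : PInjective f) :
    PInjective (pcomp g f) := by
  intro s t u hs ht
  obtain ⟨a, hsa, hau⟩ := pcomp_eq_some_iff.1 hs
  obtain ⟨b, htb, hbu⟩ := pcomp_eq_some_iff.1 ht
  exact hf hsa (hg hau hbu ▸ htb)

theorem pcomp_assoc (h g f : M → Option M) : pcomp h (pcomp g f) = pcomp (pcomp h g) f :=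
  funext fun s => Option.bind_assoc (f s) g h

@[simp] theorem pcomp_pid (g : M → Option M) : pcomp g pid = g := rfl

@[simp] theorem pid_pcomp (f : M → Option M) : pcomp pid f = f :=
  funext fun s => by simp only [pcomp]; cases f s <;> rfl

theorem pinv_pid : pinv (pid : M → Option M) = pid :=
  funext fun t => Option.ext fun s => by
    rw [pinv_eq_some_iff pinjective_pid]
    exact eq_comm

theorem pinv_pinv {f : M → Option M} (hf : PInjective f) : pinv (pinv f) = f :=
  funext fun s => Option.ext fun t => by
    rw [pinv_eq_some_iff (pinjective_pinv f), pinv_eq_some_iff hf]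

theorem pinv_pcomp {g f : M → Option M} (hg : PInjective g) (hf : PInjective f) :
    pinv (pcomp g f) = pcomp (pinv f) (pinv g) :=
  funext fun u => Option.ext fun s => by
    simp only [pinv_eq_some_iff (hg.pcomp hf), pcomp_eq_some_iff, pinv_eq_some_iff hg,
      pinv_eq_some_iff hf, and_comm]

theorem pcomp_pinv_self_apply {f : M → Option M} (hf : PInjective f) (s : M) :
    pcomp (pinv f) f s = if s ∈ pdom f then some s else none := by
  rcases hfs : f s with _ | t
  · simp [pdom, pcomp, hfs]
  · simp [pdom, pcomp, hfs, (pinv_eq_some_iff hf).2 hfs]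

theorem mem_ppre {f : M → Option M} {X : Set M} {s : M} :
    s ∈ ppre f X ↔ ∃ x ∈ X, f s = some x :=
  Iff.rfl

theorem pdom_pcomp (g f : M → Option M) : pdom (pcomp g f) = ppre f (pdom g) := by
  ext s
  simp only [mem_pdom, mem_ppre, pcomp_eq_some_iff]
  grind

theorem ppre_pcomp_pinv_self {f : M → Option M} (hf : PInjective f) (Y : Set M) :
    ppre (pcomp (pinv f) f) Y = pdom f ∩ Y := by
  ext s
  simp only [mem_ppre, pcomp_pinv_self_apply hf, Set.mem_inter_iff]
  split_ifs with hs <;> simp [hs]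

section InverseHull

variable [Mul M]

noncomputable def pword (l : List (M × M)) : M → Option M :=
  l.foldl (fun acc p => pcomp (pblock p) acc) pid

theorem foldl_pblock_eq (l : List (M × M)) (f : M → Option M) :
    l.foldl (fun acc p => pcomp (pblock p) acc) f = pcomp (pword l) f := by
  induction l generalizing f with
  | nil => exact (pid_pcomp f).symm
  | cons p l ih =>
    simp only [List.foldl_cons, pword]
    rw [ih, ih (pcomp (pblock p) pid), pcomp_pid, pcomp_assoc]

theorem pword_append (l₁ l₂ : List (M × M)) :
    pword (l₁ ++ l₂) = pcomp (pword l₂) (pword l₁) := by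
  rw [pword, List.foldl_append, foldl_pblock_eq]
  rfl

theorem pword_cons (p : M × M) (l : List (M × M)) :
    pword (p :: l) = pcomp (pword l) (pblock p) :=
  pword_append [p] l

theorem InInvHull.pcomp {g f : M → Option M} (hg : InInvHull g) (hf : InInvHull f) :
    InInvHull (pcomp g f) := by
  obtain ⟨lg, hlg, rfl⟩ := hg
  obtain ⟨lf, hlf, rfl⟩ := hf
  exact ⟨lf ++ lg, by simp [hlf], (pword_append lf lg).symm⟩

theorem inInvHull_pblock (p : M × M) : InInvHull (pblock p) :=
  ⟨[p], List.cons_ne_nil _ _, rfl⟩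

theorem IsConstructible.ppre {f : M → Option M} {X : Set M} (hf : InInvHull f)
    (hX : IsConstructible X) : IsConstructible (ppre f X) := by
  obtain ⟨g, hg, rfl⟩ := hX
  exact ⟨pcomp g f, hg.pcomp hf, (pdom_pcomp g f).symm⟩

section LeftCancel

variable [IsLeftCancelMul M]

theorem pinjective_pblock (p : M × M) : PInjective (pblock p) :=
  (pinjective_pinv _).pcomp (pinjective_ptransl _)

theorem pinjective_pword (l : List (M × M)) : PInjective (pword l) := by
  induction l with
  | nil => exact pinjective_pid
  | cons p l ih => rw [pword_cons]; exact ih.pcomp (pinjective_pblock p)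

theorem InInvHull.pinjective {f : M → Option M} (hf : InInvHull f) : PInjective f := by
  obtain ⟨l, -, rfl⟩ := hf
  exact pinjective_pword l

theorem pinv_pblock (p : M × M) : pinv (pblock p) = pblock p.swap := by
  rw [pblock, pinv_pcomp (pinjective_pinv _) (pinjective_ptransl _),
    pinv_pinv (pinjective_ptransl _)]
  rfl

theorem pinv_pword (l : List (M × M)) : pinv (pword l) = pword (l.reverse.map Prod.swap) := by
  induction l with
  | nil => exact pinv_pid
  | cons p l ih =>
    rw [pword_cons, pinv_pcomp (pinjective_pword l) (pinjective_pblock p), ih, pinv_pblock,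
      List.reverse_cons, List.map_append, pword_append]
    rfl

theorem InInvHull.pinv {f : M → Option M} (hf : InInvHull f) : InInvHull (pinv f) := by
  obtain ⟨l, hl, rfl⟩ := hf
  exact ⟨l.reverse.map Prod.swap, by simpa using hl, pinv_pword l⟩

theorem IsConstructible.inter {X Y : Set M} (hX : IsConstructible X) (hY : IsConstructible Y) :
    IsConstructible (X ∩ Y) := by
  obtain ⟨f, hf, rfl⟩ := hX
  rw [← ppre_pcomp_pinv_self hf.pinjective]
  exact hY.ppre (hf.pinv.pcomp hf)

theorem IsFoundation.exists_subset_disjoint {X : Set M} {ι : Type*} {Xi : ι → Set M}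
    (hF : IsFoundation X Xi) (hX : IsConstructible X) (hXi : ∀ i, IsConstructible (Xi i))
    {Y : Set M} (hY : IsConstructible Y) (hYne : Y.Nonempty) :
    ∃ Y' ⊆ Y, IsConstructible Y' ∧ Y'.Nonempty ∧ Disjoint Y' (X \ ⋃ i, Xi i) := by
  by_cases hYX : (Y ∩ X).Nonempty
  · obtain ⟨i, hi⟩ := hF.2 _ (hY.inter hX) hYX Set.inter_subset_right
    refine ⟨Y ∩ Xi i, Set.inter_subset_left, hY.inter (hXi i),
      hi.mono (Set.inter_subset_inter_left _ Set.inter_subset_left), ?_⟩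
    exact Set.disjoint_left.2 fun s hs hd => hd.2 (Set.mem_iUnion.2 ⟨i, hs.2⟩)
  · exact ⟨Y, subset_rfl, hY, hYne, Set.disjoint_left.2 fun s hs hd => hYX ⟨s, hs, hd.1⟩⟩

end LeftCancel

end InverseHull

section MulOneClass

variable [MulOneClass M]

theorem ptransl_one : ptransl (1 : M) = pid := funext fun t => congrArg some (one_mul t)

theorem pblock_right_one (s : M) : pblock (s, 1) = ptransl s := by
  rw [pblock, ptransl_one, pinv_pid, pid_pcomp]

theorem pblock_left_one (s : M) : pblock (1, s) = pinv (ptransl s) := by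
  rw [pblock, ptransl_one, pcomp_pid]

theorem inInvHull_ptransl (s : M) : InInvHull (ptransl s) :=
  pblock_right_one s ▸ inInvHull_pblock (s, 1)

theorem inInvHull_pinv_ptransl (s : M) : InInvHull (pinv (ptransl s)) :=
  pblock_left_one s ▸ inInvHull_pblock (1, s)

theorem inInvHull_pid : InInvHull (pid : M → Option M) :=
  ptransl_one (M := M) ▸ inInvHull_ptransl 1

end MulOneClass


section Operators

local notation "𝓗" M:max => lp (fun _ : M => ℂ) 2
local notation "𝓑" M:max => lp (fun _ : M => ℂ) 2 →L[ℂ] lp (fun _ : M => ℂ) 2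
local notation "δ" s:max => lp.single 2 s (1 : ℂ)

theorem ext_single {T U : 𝓑 M} (h : ∀ s, T (δ s) = U (δ s)) : T = U := by
  refine lp.ext_continuousLinearMap ENNReal.ofNat_ne_top fun s =>
    ContinuousLinearMap.ext fun a => ?_
  have hs : (lp.single 2 s a : 𝓗 M) = a • δ s := by rw [← lp.single_smul, smul_eq_mul, mul_one]
  simp [hs, h]

theorem apply_eq_inner_single (x : 𝓗 M) (u : M) : x u = inner ℂ (δ u) x := by
  simp [lp.inner_single_left]

theorem proj_diff_eq_sub_mul (P : Set M → 𝓑 M)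
    (hP : ∀ (X : Set M) (s : M), P X (δ s) = if s ∈ X then δ s else 0) (X Y : Set M) :
    P (X \ Y) = P X - P X * P Y := ext_single fun s => by
  change _ = P X (δ s) - P X (P Y (δ s))
  by_cases hX : s ∈ X <;> by_cases hY : s ∈ Y <;> simp [hP, hX, hY]

def ActsOnBasisBy (T : 𝓑 M) (f : M → Option M) : Prop :=
  ∀ s, T (δ s) = (f s).elim 0 fun t => δ t

theorem actsOnBasisBy_one : ActsOnBasisBy (1 : 𝓑 M) pid := fun _ => rfl

theorem ActsOnBasisBy.mul {U T : 𝓑 M} {g f : M → Option M} (hU : ActsOnBasisBy U g)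
    (hT : ActsOnBasisBy T f) : ActsOnBasisBy (U * T) (pcomp g f) := by
  intro s
  change U (T (δ s)) = _
  rw [hT s]
  rcases hfs : f s with _ | t
  · simp [pcomp, hfs]
  · simpa [pcomp, hfs] using hU t

section Vanishing

variable [Mul M]

variable (M) in
def vanishingSubmodule : Submodule ℂ (𝓑 M) where
  carrier := {T | ∀ Y, IsConstructible Y → Y.Nonempty →
    ∃ Y' ⊆ Y, IsConstructible Y' ∧ Y'.Nonempty ∧ ∀ s ∈ Y', T (δ s) = 0}
  zero_mem' Y hY hYne := ⟨Y, subset_rfl, hY, hYne, fun _ _ => rfl⟩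
  add_mem' {T U} hT hU Y hY hYne := by
    obtain ⟨Y₁, hY₁, hY₁c, hY₁ne, hT₁⟩ := hT Y hY hYne
    obtain ⟨Y₂, hY₂, hY₂c, hY₂ne, hU₂⟩ := hU Y₁ hY₁c hY₁ne
    refine ⟨Y₂, hY₂.trans hY₁, hY₂c, hY₂ne, fun s hs => ?_⟩
    rw [add_apply, hT₁ s (hY₂ hs), hU₂ s hs, add_zero]
  smul_mem' c T hT Y hY hYne := by
    obtain ⟨Y', hY', hY'c, hY'ne, hT'⟩ := hT Y hY hYne
    exact ⟨Y', hY', hY'c, hY'ne, fun s hs => by rw [smul_apply, hT' s hs, smul_zero]⟩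

theorem mul_mem_vanishingSubmodule_left (a : 𝓑 M) {T : 𝓑 M}
    (hT : T ∈ vanishingSubmodule M) : a * T ∈ vanishingSubmodule M := fun Y hY hYne => by
  obtain ⟨Y', hY', hY'c, hY'ne, hT'⟩ := hT Y hY hYne
  exact ⟨Y', hY', hY'c, hY'ne, fun s hs => by rw [mul_apply_eq_comp, hT' s hs, map_zero]⟩

theorem mul_mem_topologicalClosure_vanishingSubmodule_left (a : 𝓑 M) {T : 𝓑 M}
    (hT : T ∈ (vanishingSubmodule M).topologicalClosure) :
    a * T ∈ (vanishingSubmodule M).topologicalClosure :=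
  map_mem_closure (continuous_const_mul a) hT fun _ hU => mul_mem_vanishingSubmodule_left a hU

theorem notMem_topologicalClosure_vanishingSubmodule {Q : 𝓑 M} {A : Set M}
    (hQ : ∀ s, Q (δ s) = if s ∈ A then δ s else 0) (hA : IsConstructible A)
    (hAne : A.Nonempty) : Q ∉ (vanishingSubmodule M).topologicalClosure := by
  intro hQV
  obtain ⟨T, hT, hdist⟩ := Metric.mem_closure_iff.1 hQV 1 one_pos
  obtain ⟨Y, hYA, -, ⟨s, hs⟩, hTY⟩ := hT A hA hAne
  have hδ : (Q - T) (δ s) = δ s := by rw [sub_apply, hTY s hs, sub_zero, hQ, if_pos (hYA hs)]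
  have := (Q - T).le_opNorm (δ s)
  rw [hδ, lp.norm_single (by norm_num), norm_one, mul_one, ← dist_eq_norm] at this
  linarith

variable [IsLeftCancelMul M]

theorem mem_vanishingSubmodule_of_isFoundation (P : Set M → 𝓑 M)
    (hP : ∀ (X : Set M) (s : M), P X (δ s) = if s ∈ X then δ s else 0) {X : Set M} {ι : Type*}
    {Xi : ι → Set M} (hX : IsConstructible X) (hXi : ∀ i, IsConstructible (Xi i))
    (hF : IsFoundation X Xi) : P (X \ ⋃ i, Xi i) ∈ vanishingSubmodule M := fun Y hY hYne => by
  obtain ⟨Y', hY', hY'c, hY'ne, hdisj⟩ := hF.exists_subset_disjoint hX hXi hY hYne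
  exact ⟨Y', hY', hY'c, hY'ne, fun s hs => by rw [hP, if_neg (Set.disjoint_left.1 hdisj hs)]⟩

/-- `ppre (pinv f) Y` is the image `f(Y)`; the vanishing of `T` on a part `Z` of it pulls back
to `Y ∩ f⁻¹(Z)`. -/
theorem mul_mem_vanishingSubmodule_of_actsOnBasisBy {T v : 𝓑 M} {f : M → Option M}
    (hT : T ∈ vanishingSubmodule M) (hf : InInvHull f) (hv : ActsOnBasisBy v f) :
    T * v ∈ vanishingSubmodule M := fun Y hY hYne => by
  by_cases hfY : (ppre (pinv f) Y).Nonempty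
  · obtain ⟨Z, hZ, hZc, ⟨t, htZ⟩, hTZ⟩ := hT _ (hY.ppre hf.pinv) hfY
    obtain ⟨y, hyY, hfy⟩ := hZ htZ
    refine ⟨Y ∩ ppre f Z, Set.inter_subset_left, hY.inter (hZc.ppre hf),
      ⟨y, hyY, t, htZ, (pinv_eq_some_iff hf.pinjective).1 hfy⟩, ?_⟩
    rintro s ⟨-, u, huZ, hfs⟩
    rw [mul_apply_eq_comp, hv s, hfs]
    exact hTZ u huZ
  · refine ⟨Y, subset_rfl, hY, hYne, fun s hs => ?_⟩
    rcases hfs : f s with _ | u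
    · rw [mul_apply_eq_comp, hv s, hfs, Option.elim_none, map_zero]
    · exact absurd ⟨u, s, hs, (pinv_eq_some_iff hf.pinjective).2 hfs⟩ hfY

end Vanishing

variable (lam : M → 𝓑 M)

theorem star_lam_single_apply [Mul M] (hlam : ∀ s t : M, lam s (δ t) = δ (s * t))
    (r t u : M) : (star (lam r) (δ t)) u = if r * u = t then 1 else 0 := by
  rw [apply_eq_inner_single, ContinuousLinearMap.star_eq_adjoint,
    ContinuousLinearMap.adjoint_inner_right, hlam, lp.inner_single_left, lp.single_apply,
    Pi.single_apply]
  split_ifs <;> simp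

theorem actsOnBasisBy_star_lam [Mul M] [IsLeftCancelMul M]
    (hlam : ∀ s t : M, lam s (δ t) = δ (s * t)) (r : M) :
    ActsOnBasisBy (star (lam r)) (pinv (ptransl r)) := by
  intro t
  ext u
  rw [star_lam_single_apply lam hlam]
  rcases h : pinv (ptransl r) t with _ | v
  · have hu : r * u ≠ t := fun hu => by
      rw [(pinv_eq_some_iff (pinjective_ptransl r)).2 (congrArg some hu)] at h
      cases h
    simp [hu]
  · have hv : ptransl r v = some t := apply_eq_some_of_pinv_eq_some h
    obtain rfl : r * v = t := Option.some.inj hv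
    simp [lp.single_apply, Pi.single_apply]

noncomputable def lamWords : Submonoid (𝓑 M) :=
  Submonoid.closure (Set.range lam ∪ star (Set.range lam))

theorem lamWords_subset_adjoin :
    (lamWords lam : Set (𝓑 M)) ⊆ StarAlgebra.adjoin ℂ (Set.range lam) := fun _ hw =>
  (StarAlgebra.adjoin_eq_span (R := ℂ) (Set.range lam)).ge (Submodule.subset_span hw)

section Words

variable [MulOneClass M] [IsLeftCancelMul M] (hlam : ∀ s t : M, lam s (δ t) = δ (s * t))
include hlam

theorem exists_inInvHull_of_mem_lamWords {w : 𝓑 M} (hw : w ∈ lamWords lam) :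
    ∃ f, InInvHull f ∧ ActsOnBasisBy w f := by
  induction hw using Submonoid.closure_induction with
  | mem w hw =>
    rcases hw with ⟨r, rfl⟩ | hw
    · exact ⟨ptransl r, inInvHull_ptransl r, hlam r⟩
    · obtain ⟨r, hr⟩ := Set.mem_star.1 hw
      rw [← star_star w, ← hr]
      exact ⟨_, inInvHull_pinv_ptransl r, actsOnBasisBy_star_lam lam hlam r⟩
  | one => exact ⟨pid, inInvHull_pid, actsOnBasisBy_one⟩
  | mul _ _ _ _ hx hy =>
    obtain ⟨f, hf, hxf⟩ := hx
    obtain ⟨g, hg, hyg⟩ := hy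
    exact ⟨pcomp f g, hf.pcomp hg, hxf.mul hyg⟩

theorem exists_mem_lamWords_of_inInvHull {f : M → Option M} (hf : InInvHull f) :
    ∃ T ∈ lamWords lam, ActsOnBasisBy T f := by
  obtain ⟨l, -, rfl⟩ := hf
  induction l with
  | nil => exact ⟨1, one_mem _, actsOnBasisBy_one⟩
  | cons p l ih =>
    obtain ⟨T, hT, hTl⟩ := ih
    refine ⟨T * (star (lam p.2) * lam p.1), mul_mem hT (mul_mem ?_ ?_), ?_⟩
    · exact Submonoid.subset_closure (Or.inr ⟨p.2, by simp⟩)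
    · exact Submonoid.subset_closure (Or.inl ⟨p.1, rfl⟩)
    · show ActsOnBasisBy _ (pword (p :: l))
      rw [pword_cons]
      exact hTl.mul ((actsOnBasisBy_star_lam lam hlam p.2).mul (hlam p.1))

theorem mul_mem_vanishingSubmodule_of_mem_adjoin {T a : 𝓑 M}
    (hT : T ∈ vanishingSubmodule M) (ha : a ∈ StarAlgebra.adjoin ℂ (Set.range lam)) :
    T * a ∈ vanishingSubmodule M := by
  replace ha := (StarAlgebra.adjoin_eq_span (R := ℂ) (Set.range lam)).le ha
  induction ha using Submodule.span_induction with
  | mem w hw =>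
    obtain ⟨f, hf, hwf⟩ := exists_inInvHull_of_mem_lamWords lam hlam hw
    exact mul_mem_vanishingSubmodule_of_actsOnBasisBy hT hf hwf
  | zero => rw [mul_zero]; exact zero_mem _
  | add a b _ _ ha hb => simpa [mul_add] using add_mem ha hb
  | smul c a _ ha => simpa [mul_smul_comm] using Submodule.smul_mem _ c ha

theorem mul_mem_topologicalClosure_vanishingSubmodule_right {T a : 𝓑 M}
    (hT : T ∈ (vanishingSubmodule M).topologicalClosure)
    (ha : a ∈ (StarAlgebra.adjoin ℂ (Set.range lam)).topologicalClosure) :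
    T * a ∈ (vanishingSubmodule M).topologicalClosure :=
  map_mem_closure₂ continuous_mul hT ha fun _ hU _ hb =>
    mul_mem_vanishingSubmodule_of_mem_adjoin lam hlam hU hb

section Projections

variable (P : Set M → 𝓑 M)
  (hP : ∀ (X : Set M) (s : M), P X (δ s) = if s ∈ X then δ s else 0)
include hP

theorem mem_adjoin_of_isConstructible {X : Set M} (hX : IsConstructible X) :
    P X ∈ StarAlgebra.adjoin ℂ (Set.range lam) := by
  obtain ⟨f, hf, rfl⟩ := hX
  obtain ⟨T, hT, hTf⟩ := exists_mem_lamWords_of_inInvHull lam hlam hf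
  obtain ⟨T', hT', hT'f⟩ := exists_mem_lamWords_of_inInvHull lam hlam hf.pinv
  have hPT : P (pdom f) = T' * T := ext_single fun s => by
    rw [hP, hT'f.mul hTf s, pcomp_pinv_self_apply hf.pinjective]
    split_ifs <;> rfl
  rw [hPT]
  exact mul_mem (lamWords_subset_adjoin lam hT') (lamWords_subset_adjoin lam hT)

theorem mem_adjoin_diff_iUnion {ι : Type*} [Finite ι] {X : Set M} {Xi : ι → Set M}
    (hX : IsConstructible X) (hXi : ∀ i, IsConstructible (Xi i)) :
    P (X \ ⋃ i, Xi i) ∈ StarAlgebra.adjoin ℂ (Set.range lam) := by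
  have := Fintype.ofFinite ι
  suffices ∀ s : Finset ι, P (X \ ⋃ i ∈ s, Xi i) ∈ StarAlgebra.adjoin ℂ (Set.range lam) by
    simpa using this Finset.univ
  intro s
  induction s using Finset.induction_on with
  | empty => simpa using mem_adjoin_of_isConstructible lam hlam P hP hX
  | insert a s _ ih =>
    rw [Finset.set_biUnion_insert, Set.union_comm, ← Set.sdiff_sdiff, proj_diff_eq_sub_mul P hP]
    exact sub_mem ih (mul_mem ih (mem_adjoin_of_isConstructible lam hlam P hP (hXi a)))

end Projections

end Words

end Operators

/-- Let `S` be a left cancellative monoid, `λ_s` the isometries of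
`ℓ²(S)` with `λ_s δ_t = δ_{st}`, `1_X` the coordinate projections, `C = C*_r(S)` the
closed *-subalgebra of `B(ℓ²(S))` generated by the `λ_s`, and `I` the smallest closed
two-sided ideal of `C` containing the projections `1_{X ∖ (X₁ ∪ ⋯ ∪ Xₘ)}` for all
foundation sets `{X₁, …, Xₘ}` of constructible right ideals `X`.  Then `1_A ∉ I` for
every nonempty constructible right ideal `A`; in particular `I` is proper.
(Here `I` is realized as the intersection of all closed two-sided ideals of `C`
containing these projections, and `λ_s`, `1_X` are pinned down by their action on the
standard basis vectors `lp.single 2 t 1 = δ_t`, which determines them uniquely.) -/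
theorem cstar_stmt4 {M : Type*} [Monoid M] [IsLeftCancelMul M]
    (lam : M → (lp (fun _ : M => ℂ) 2 →L[ℂ] lp (fun _ : M => ℂ) 2))
    (hlam : ∀ s t : M, lam s (lp.single 2 t 1) = lp.single 2 (s * t) 1)
    (P : Set M → (lp (fun _ : M => ℂ) 2 →L[ℂ] lp (fun _ : M => ℂ) 2))
    (hP : ∀ (X : Set M) (s : M),
      P X (lp.single 2 s 1) = if s ∈ X then lp.single 2 s 1 else 0)
    (C : Set (lp (fun _ : M => ℂ) 2 →L[ℂ] lp (fun _ : M => ℂ) 2))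
    (hC : C = closure
      ((StarAlgebra.adjoin ℂ (Set.range lam) :
        StarSubalgebra ℂ (lp (fun _ : M => ℂ) 2 →L[ℂ] lp (fun _ : M => ℂ) 2)) :
        Set (lp (fun _ : M => ℂ) 2 →L[ℂ] lp (fun _ : M => ℂ) 2)))
    (A : Set M) (hA : IsConstructible A) (hAne : A.Nonempty) :
    P A ∉ ⋂₀ {I : Set (lp (fun _ : M => ℂ) 2 →L[ℂ] lp (fun _ : M => ℂ) 2) |
      I ⊆ C ∧ IsClosed I ∧
      (0 : lp (fun _ : M => ℂ) 2 →L[ℂ] lp (fun _ : M => ℂ) 2) ∈ I ∧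
      (∀ x ∈ I, ∀ y ∈ I, x + y ∈ I) ∧
      (∀ (c : ℂ), ∀ x ∈ I, c • x ∈ I) ∧
      (∀ a ∈ C, ∀ x ∈ I, a * x ∈ I ∧ x * a ∈ I) ∧
      (∀ (m : ℕ), 1 ≤ m → ∀ (X : Set M) (Xi : Fin m → Set M),
        IsConstructible X → (∀ i, IsConstructible (Xi i)) →
        IsFoundation X Xi → P (X \ ⋃ i, Xi i) ∈ I)} := by
  rw [← StarSubalgebra.topologicalClosure_coe] at hC
  subst hC
  set S := StarAlgebra.adjoin ℂ (Set.range lam)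
  set W := vanishingSubmodule M
  intro hPA
  refine notMem_topologicalClosure_vanishingSubmodule (hP A) hA hAne
    (hPA (S.topologicalClosure ∩ W.topologicalClosure) ?_).2
  refine ⟨Set.inter_subset_left,
    S.isClosed_topologicalClosure.inter W.isClosed_topologicalClosure,
    ⟨zero_mem _, zero_mem _⟩, fun x hx y hy => ⟨add_mem hx.1 hy.1, add_mem hx.2 hy.2⟩,
    fun c x hx => ⟨S.topologicalClosure.smul_mem hx.1 c, W.topologicalClosure.smul_mem c hx.2⟩,
    fun a ha x hx => ?_,
    fun m _ X Xi hX hXi hF => ⟨?_, ?_⟩⟩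
  · exact ⟨⟨mul_mem ha hx.1, mul_mem_topologicalClosure_vanishingSubmodule_left a hx.2⟩,
      ⟨mul_mem hx.1 ha, mul_mem_topologicalClosure_vanishingSubmodule_right lam hlam hx.2 ha⟩⟩
  · exact S.le_topologicalClosure (mem_adjoin_diff_iUnion lam hlam P hP hX hXi)
  · exact W.le_topologicalClosure (mem_vanishingSubmodule_of_isFoundation P hP hX hXi hF)

end SgC
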